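/- For every even n ≥ 2, the word S̄_n obtained from the recursion of Definition 4.3(iv) satisfies: for each 1 ≤ i < j ≤ n with j − i ≥ 2, the projection S̄_n[x_i, x_j] equals x_i x_j x_i x_j. -/

import Mathlib

/-- The two linear parts of the double-linear word `S̄ n` of Definition 4.3(iv):
`S̄ 1 = x₁²`; if `k` is odd and `S̄ k = (s' · xₖ)(s · xₖ x_{k-1})` then
`S̄ (k+1) = (s' · x_{k+1} xₖ)(s · xₖ x_{k-1} · x_{k+1})`; if `k` is even and
`S̄ k = (s · xₖ x_{k-1})(s' · xₖ)` then
`S̄ (k+1) = (s · xₖ x_{k-1} · x_{k+1})(s' · x_{k+1} · xₖ)`. -/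
def sbarPair : ℕ → List ℕ × List ℕ
  | 0 => ([], [])
  | 1 => ([1], [1])
  | (k+2) =>
    let p := sbarPair (k+1)
    if (k+1) % 2 = 1 then (p.1.dropLast ++ [k+2, k+1], p.2 ++ [k+2])
    else (p.1 ++ [k+2], p.2.dropLast ++ [k+2, k+1])

/-- The word `S̄ n`, e.g. `S̄ 8 = (x₂x₁x₄x₃x₆x₅x₈x₇)(x₁x₃x₂x₅x₄x₇x₆x₈)`. -/
def sbarW (n : ℕ) : List ℕ := (sbarPair n).1 ++ (sbarPair n).2

/-- Projection of a word to the two variables `i`, `j` (deleting all other letters). -/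
def proj2 (u : List ℕ) (i j : ℕ) : List ℕ := u.filter (fun a => a == i || a == j)

/-!
For even `n = 2m + 2`, unwinding the recursion two steps at a time gives
`S̄ n = (x₂ x₁ x₄ x₃ ⋯ xₙ x_{n-1}) (x₁ x₃ x₂ ⋯ x_{n-1} x_{n-2} xₙ)`.
Each half uses every letter `x₁, …, xₙ` exactly once and only swaps letters with adjacent
indices, so in each half `xᵢ` precedes `xⱼ` whenever `i + 2 ≤ j`; hence each half projects
to `xᵢ xⱼ`.
-/

open scoped List

lemma List.filter_beq_or_beq_eq_pair_of_sublist {l : List ℕ} {i j : ℕ} (hl : l.Nodup)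
    (hij : [i, j] <+ l) : l.filter (fun a => a == i || a == j) = [i, j] := by
  have hne : i ≠ j := by simpa using hl.sublist hij
  have hsub : [i, j] <+ l.filter (fun a => a == i || a == j) := by
    simpa using hij.filter (fun a => a == i || a == j)
  refine (hsub.eq_of_length_le ((hl.filter _).subperm fun a ha => ?_).length_le).symm
  simp only [List.mem_filter, Bool.or_eq_true, beq_iff_eq] at ha
  simpa using ha.2

lemma proj2_append (u v : List ℕ) (i j : ℕ) : proj2 (u ++ v) i j = proj2 u i j ++ proj2 v i j :=
  List.filter_append ..

structure IsNearlySorted (c : ℕ) (l : List ℕ) : Prop where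
  mem_iff : ∀ a, a ∈ l ↔ 1 ≤ a ∧ a ≤ c
  nodup : l.Nodup
  pair_sublist : ∀ i j, 1 ≤ i → i + 2 ≤ j → j ≤ c → [i, j] <+ l

namespace IsNearlySorted

lemma nil : IsNearlySorted 0 [] :=
  ⟨fun a => by simp only [List.not_mem_nil, false_iff]; omega, List.nodup_nil,
    fun _ _ _ _ _ => by omega⟩

lemma append {c d : ℕ} {l t : List ℕ} (hl : IsNearlySorted c l) (hd : d ≤ 2) (ht : t.Nodup)
    (ht_mem : ∀ a, a ∈ t ↔ c < a ∧ a ≤ c + d) : IsNearlySorted (c + d) (l ++ t) where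
  mem_iff a := by rw [List.mem_append, hl.mem_iff, ht_mem]; omega
  nodup := by
    refine List.nodup_append.2 ⟨hl.nodup, ht, fun a ha b hb => ?_⟩
    have := (hl.mem_iff a).1 ha
    have := (ht_mem b).1 hb
    omega
  pair_sublist i j hi hij hj := by
    by_cases hjc : j ≤ c
    · exact (hl.pair_sublist i j hi hij hjc).trans (List.sublist_append_left l t)
    · exact List.Sublist.append (List.singleton_sublist.2 ((hl.mem_iff i).2 ⟨hi, by omega⟩))
        (List.singleton_sublist.2 ((ht_mem j).2 ⟨by omega, hj⟩))

lemma append_pair {c : ℕ} {l : List ℕ} (hl : IsNearlySorted c l) :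
    IsNearlySorted (c + 2) (l ++ [c + 2, c + 1]) :=
  hl.append le_rfl (by simp) fun a => by
    simp only [List.mem_cons, List.not_mem_nil, or_false]; omega

lemma append_singleton {c : ℕ} {l : List ℕ} (hl : IsNearlySorted c l) :
    IsNearlySorted (c + 1) (l ++ [c + 1]) :=
  hl.append (by norm_num) (List.nodup_singleton _) fun a => by
    simp only [List.mem_cons, List.not_mem_nil, or_false]; omega

lemma proj2_eq {c : ℕ} {l : List ℕ} (hl : IsNearlySorted c l) {i j : ℕ} (hi : 1 ≤ i)
    (hij : i + 2 ≤ j) (hj : j ≤ c) : proj2 l i j = [i, j] :=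
  List.filter_beq_or_beq_eq_pair_of_sublist hl.nodup (hl.pair_sublist i j hi hij hj)

end IsNearlySorted

def swappedPairs : ℕ → List ℕ
  | 0 => [2, 1]
  | m + 1 => swappedPairs m ++ [2 * m + 4, 2 * m + 3]

def shiftedSwappedPairs : ℕ → List ℕ
  | 0 => [1]
  | m + 1 => shiftedSwappedPairs m ++ [2 * m + 3, 2 * m + 2]

lemma isNearlySorted_swappedPairs (m : ℕ) : IsNearlySorted (2 * m + 2) (swappedPairs m) := by
  induction m with
  | zero => exact IsNearlySorted.nil.append_pair
  | succ m ih => exact ih.append_pair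

lemma isNearlySorted_shiftedSwappedPairs (m : ℕ) :
    IsNearlySorted (2 * m + 1) (shiftedSwappedPairs m) := by
  induction m with
  | zero => exact IsNearlySorted.nil.append_singleton
  | succ m ih => exact ih.append_pair

lemma sbarPair_add_two {n : ℕ} (hn : Even n) (h0 : n ≠ 0) :
    sbarPair (n + 2) =
      ((sbarPair n).1 ++ [n + 2, n + 1], (sbarPair n).2.dropLast ++ [n + 1, n, n + 2]) := by
  obtain ⟨k, rfl⟩ : ∃ k, n = k + 1 := Nat.exists_eq_succ_of_ne_zero h0
  have hodd : (k + 1 + 1) % 2 = 1 := by rcases hn with ⟨r, hr⟩; omega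
  have heven : (k + 1) % 2 ≠ 1 := by rcases hn with ⟨r, hr⟩; omega
  simp [sbarPair, hodd, heven]

lemma sbarPair_two_mul_add_two (m : ℕ) :
    sbarPair (2 * m + 2) = (swappedPairs m, shiftedSwappedPairs m ++ [2 * m + 2]) := by
  induction m with
  | zero => rfl
  | succ m ih =>
    rw [show 2 * (m + 1) + 2 = 2 * m + 2 + 2 by ring,
      sbarPair_add_two ⟨m + 1, by ring⟩ (by omega), ih]
    simp [swappedPairs, shiftedSwappedPairs]

theorem sbarW_projections_general (n : ℕ) (he : Even n) :
    ∀ i j : ℕ, 1 ≤ i → i < j → j ≤ n → 2 ≤ j - i →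
      proj2 (sbarW n) i j = [i, j, i, j] := by
  intro i j hi hij hjn hji
  obtain ⟨_ | m, rfl⟩ := he
  · omega
  rw [show m + 1 + (m + 1) = 2 * m + 2 by ring] at hjn ⊢
  have hfirst := isNearlySorted_swappedPairs m
  have hsecond := (isNearlySorted_shiftedSwappedPairs m).append_singleton
  rw [sbarW, sbarPair_two_mul_add_two, proj2_append,
    hfirst.proj2_eq hi (by omega) hjn, hsecond.proj2_eq hi (by omega) hjn]
  rfl

/-- For every even `n ≥ 2` and all `1 ≤ i < j ≤ n` with `j - i ≥ 2`, the projection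
`S̄ n[xᵢ,xⱼ]` equals `xᵢ xⱼ xᵢ xⱼ`. -/
theorem sbarW_projections (n : ℕ) (hn : 2 ≤ n) (he : Even n) :
    ∀ i j : ℕ, 1 ≤ i → i < j → j ≤ n → 2 ≤ j - i →
      proj2 (sbarW n) i j = [i, j, i, j] :=
  sbarW_projections_general n he
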